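/- arXiv:1903.12584 — 2 statements merged into one kernel-verified Lean document; each statement's English description precedes it below -/
import Mathlib

section
/- Fix y ∈ ℝⁿ, a matrix X ∈ ℝ^{n×p}, a parameter λ₂ > 0, and a vector β̂ ∈ ℝᵖ such that the residual ε̂ = y − X β̂ is nonzero. Then β̂ is a global minimizer of the square-root Lasso objective β ↦ ‖y − X β‖₂ + λ₂ ‖β‖₁ if and only if β̂ is a global minimizer of the classical Lasso objective β ↦ ½‖y − X β‖₂² + λ₁ ‖β‖₁ with λ₁ = λ₂ · ‖ε̂‖₂. -/
open Matrix

/-- Euclidean norm of a vector in `ℝⁿ`. -/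
noncomputable def l2norm {n : ℕ} (v : Fin n → ℝ) : ℝ := Real.sqrt (∑ i, (v i) ^ 2)

/-- L1 norm of a vector in `ℝᵖ`. -/
def l1norm {p : ℕ} (b : Fin p → ℝ) : ℝ := ∑ j, |b j|

/-!
Write `c = ‖ε̂‖₂ > 0`. Since `½ t² ≥ ½ c² + c (t - c)`, multiplying the square-root Lasso
inequality by `c` gives the Lasso inequality. Conversely, testing Lasso optimality at
`β̂ + s (β - β̂)` and using convexity of both terms gives
`0 ≤ c · (difference of the square-root Lasso objectives at β and β̂) + O(s)` for `s ∈ (0, 1]`;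
let `s → 0`.
-/

open Set Filter Topology

lemma nonneg_of_forall_nonneg_add_mul {a b : ℝ} (h : ∀ s ∈ Ioc (0 : ℝ) 1, 0 ≤ a + s * b) :
    0 ≤ a := by
  have hlim : Tendsto (fun s : ℝ => a + s * b) (𝓝[>] 0) (𝓝 a) :=
    ((continuous_const.add (continuous_id.mul continuous_const)).tendsto' 0 a
      (by simp)).mono_left nhdsWithin_le_nhds
  exact ge_of_tendsto hlim (eventually_of_mem (Ioc_mem_nhdsGT one_pos) h)

theorem forall_add_le_iff_forall_half_sq_add_le {E : Type*} [AddCommGroup E] [Module ℝ E]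
    {f g : E → ℝ} {x₀ : E} {lam : ℝ} (hf : ConvexOn ℝ univ f) (hg : ConvexOn ℝ univ g)
    (hf0 : ∀ x, 0 ≤ f x) (hc : 0 < f x₀) (hlam : 0 ≤ lam) :
    (∀ x, f x₀ + lam * g x₀ ≤ f x + lam * g x) ↔
      ∀ x, 1 / 2 * f x₀ ^ 2 + lam * f x₀ * g x₀ ≤ 1 / 2 * f x ^ 2 + lam * f x₀ * g x := by
  set c := f x₀
  constructor
  · intro hmin x
    nlinarith [sq_nonneg (f x - c), mul_le_mul_of_nonneg_left (hmin x) hc.le]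
  · intro hmin x
    have hslope : ∀ s ∈ Ioc (0 : ℝ) 1,
        0 ≤ c * (f x + lam * g x - c - lam * g x₀) + s * ((f x - c) ^ 2 / 2) := by
      rintro s ⟨hs0, hs1⟩
      have hfs : f ((1 - s) • x₀ + s • x) ≤ (1 - s) * c + s * f x :=
        hf.2 trivial trivial (by linarith) hs0.le (by ring)
      have hgs : g ((1 - s) • x₀ + s • x) ≤ (1 - s) * g x₀ + s * g x :=
        hg.2 trivial trivial (by linarith) hs0.le (by ring)
      have hsq := pow_le_pow_left₀ (hf0 _) hfs 2
      have hlin := mul_le_mul_of_nonneg_left hgs (mul_nonneg hlam hc.le)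
      have hs : 0 ≤ s * (c * (f x + lam * g x - c - lam * g x₀) + s * ((f x - c) ^ 2 / 2)) := by
        nlinarith [hmin ((1 - s) • x₀ + s • x)]
      exact nonneg_of_mul_nonneg_right hs hs0
    have hdiff := (mul_nonneg_iff_of_pos_left hc).1 (nonneg_of_forall_nonneg_add_mul hslope)
    linarith

lemma l2norm_eq_norm {n : ℕ} (v : Fin n → ℝ) : l2norm v = ‖WithLp.toLp 2 v‖ := by
  simp [EuclideanSpace.norm_eq, l2norm]

lemma l2norm_pos {n : ℕ} {v : Fin n → ℝ} (hv : v ≠ 0) : 0 < l2norm v := by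
  simpa [l2norm_eq_norm] using hv

lemma l2norm_sq {n : ℕ} (v : Fin n → ℝ) : l2norm v ^ 2 = ∑ i, v i ^ 2 :=
  Real.sq_sqrt (by positivity)

lemma l1norm_eq_norm {p : ℕ} (b : Fin p → ℝ) : l1norm b = ‖WithLp.toLp 1 b‖ := by
  simp [PiLp.norm_eq_of_L1, l1norm]

lemma convexOn_l1norm {p : ℕ} : ConvexOn ℝ univ (l1norm : (Fin p → ℝ) → ℝ) := by
  simpa [Function.comp_def, ← l1norm_eq_norm] using (convexOn_norm convex_univ).comp_linearMap
    (WithLp.linearEquiv 1 ℝ (Fin p → ℝ)).symm.toLinearMap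

lemma convexOn_l2norm_sub_mulVec {n p : ℕ} (X : Matrix (Fin n) (Fin p) ℝ) (y : Fin n → ℝ) :
    ConvexOn ℝ univ fun b => l2norm (y - X *ᵥ b) := by
  simpa [Function.comp_def, l2norm_eq_norm, ← WithLp.toLp_sub] using
    (convexOn_norm convex_univ).comp_affineMap
      (AffineMap.const ℝ (Fin p → ℝ) (WithLp.toLp 2 y) -
        ((WithLp.linearEquiv 2 ℝ (Fin n → ℝ)).symm.toLinearMap ∘ₗ X.mulVecLin).toAffineMap)

/-- for `λ₂ > 0` and `β̂` with nonzero residual `ε̂ = y − Xβ̂`,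
`β̂` globally minimizes the square-root Lasso objective with parameter `λ₂`
iff it globally minimizes the classical Lasso objective with `λ₁ = λ₂ ‖ε̂‖₂`. -/
theorem sqrtLasso_iff_lasso {n p : ℕ} (X : Matrix (Fin n) (Fin p) ℝ) (y : Fin n → ℝ)
    (lam2 : ℝ) (hlam2 : 0 < lam2) (bhat : Fin p → ℝ)
    (hres : y - X.mulVec bhat ≠ 0) :
    (∀ b : Fin p → ℝ,
        l2norm (y - X.mulVec bhat) + lam2 * l1norm bhat ≤
          l2norm (y - X.mulVec b) + lam2 * l1norm b)
      ↔
    (∀ b : Fin p → ℝ,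
        (1 / 2) * (∑ i, (y i - X.mulVec bhat i) ^ 2) +
            (lam2 * l2norm (y - X.mulVec bhat)) * l1norm bhat ≤
          (1 / 2) * (∑ i, (y i - X.mulVec b i) ^ 2) +
            (lam2 * l2norm (y - X.mulVec bhat)) * l1norm b) := by
  have hrss : ∀ b, ∑ i, (y i - X.mulVec b i) ^ 2 = l2norm (y - X *ᵥ b) ^ 2 :=
    fun b => (l2norm_sq _).symm
  simp only [hrss]
  exact forall_add_le_iff_forall_half_sq_add_le (convexOn_l2norm_sub_mulVec X y) convexOn_l1norm
    (fun _ => Real.sqrt_nonneg _) (l2norm_pos hres) hlam2.le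
end

section
/- Let y ∈ ℝⁿ, let X ∈ ℝ^{n×p} have columns X₁, …, X_p, let X₋p ∈ ℝ^{n×(p−1)} be X with its p-th column removed, and let λ ≥ 0. Suppose β̂ ∈ ℝ^{p−1} is a global minimizer of the reduced classical Lasso objective β ↦ ½‖y − X₋p β‖₂² + λ‖β‖₁, with residual ε̂₋p = y − X₋p β̂. If |X_pᵀ ε̂₋p| ≤ λ, then the vector obtained from β̂ by inserting a zero in the p-th coordinate is a global minimizer of the full classical Lasso objective β ↦ ½‖y − X β‖₂² + λ‖β‖₁ over ℝᵖ. -/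
set_option maxHeartbeats 1000000


open Matrix

/-- The classical Lasso objective `β ↦ ½‖y − Xβ‖₂² + λ‖β‖₁`. -/
noncomputable def lassoObj {n q : ℕ} (X : Matrix (Fin n) (Fin q) ℝ) (y : Fin n → ℝ)
    (lam : ℝ) (b : Fin q → ℝ) : ℝ :=
  (1 / 2) * (∑ i, (y i - X.mulVec b i) ^ 2) + lam * (∑ j, |b j|)

/-- if `β̂` minimizes the reduced Lasso problem (with the last column of `X`
removed) and the left-out column satisfies `|X_pᵀ ε̂₋p| ≤ λ` where `ε̂₋p = y − X₋p β̂`,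
then appending a zero coordinate to `β̂` gives a global minimizer of the full Lasso problem. -/
theorem lasso_leave_one_out_zero_extension {n p : ℕ} (X : Matrix (Fin n) (Fin (p + 1)) ℝ)
    (y : Fin n → ℝ) (lam : ℝ) (hlam : 0 ≤ lam) (bhat : Fin p → ℝ)
    (hminred : ∀ b : Fin p → ℝ,
      lassoObj (X.submatrix id Fin.castSucc) y lam bhat ≤
        lassoObj (X.submatrix id Fin.castSucc) y lam b)
    (hip : |∑ i, X i (Fin.last p) * (y i - (X.submatrix id Fin.castSucc).mulVec bhat i)| ≤ lam) :
    ∀ b : Fin (p + 1) → ℝ,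
      lassoObj X y lam (Fin.snoc bhat 0) ≤ lassoObj X y lam b := by
  classical
  intro b
  set X' := X.submatrix id Fin.castSucc with hX'
  set ε : Fin n → ℝ := fun i => y i - X'.mulVec bhat i with hε
  set t : ℝ := b (Fin.last p) with ht
  set d' : Fin p → ℝ := fun j => b (Fin.castSucc j) - bhat j with hd'
  set g : Fin n → ℝ := fun i => X'.mulVec d' i with hg
  set h : Fin n → ℝ := fun i => g i + t * X i (Fin.last p) with hh
  set v : ℝ := ∑ i, X i (Fin.last p) * ε i with hv
  set Q : ℝ := (1/2) * ∑ i, (h i)^2 with hQ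
  set Q' : ℝ := (1/2) * ∑ i, (g i)^2 with hQ'
  have hvlam : |v| ≤ lam := hip
  -- mulVec of snoc
  have hsnoc_mulVec : ∀ (c : Fin p → ℝ) (τ : ℝ) (i : Fin n),
      X.mulVec (Fin.snoc c τ) i = X'.mulVec c i + τ * X i (Fin.last p) := by
    intro c τ i
    simp only [Matrix.mulVec, dotProduct, hX', Matrix.submatrix_apply, id_eq,
      Fin.sum_univ_castSucc, Fin.snoc_castSucc, Fin.snoc_last]
    ring
  have hsnoc_abs : ∀ (c : Fin p → ℝ) (τ : ℝ),
      (∑ j, |Fin.snoc c τ j|) = (∑ j, |c j|) + |τ| := by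
    intro c τ
    simp [Fin.sum_univ_castSucc]
  have hobj : ∀ (c : Fin p → ℝ) (τ : ℝ),
      lassoObj X y lam (Fin.snoc c τ) =
        (1/2) * (∑ i, (y i - X'.mulVec c i - τ * X i (Fin.last p))^2)
          + lam * ((∑ j, |c j|) + |τ|) := by
    intro c τ
    rw [lassoObj, hsnoc_abs]
    congr 2
    refine Finset.sum_congr rfl fun i _ => ?_
    rw [hsnoc_mulVec]; ring
  -- linearity of mulVec along the path
  have hlin : ∀ (s : ℝ) (i : Fin n),
      X'.mulVec (fun j => bhat j + s * d' j) i = X'.mulVec bhat i + s * g i := by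
    intro s i
    simp only [hg, Matrix.mulVec, dotProduct, mul_add, Finset.sum_add_distrib, Finset.mul_sum]
    congr 1
    exact Finset.sum_congr rfl fun j _ => by ring
  -- value at the zero extension
  have hFu : lassoObj X y lam (Fin.snoc bhat 0) =
      (1/2) * (∑ i, (ε i)^2) + lam * (∑ j, |bhat j|) := by
    rw [hobj]
    simp [hε]
  set Fu : ℝ := (1/2) * (∑ i, (ε i)^2) + lam * (∑ j, |bhat j|) with hFudef
  -- reduced objective along the path
  have hR : ∀ s : ℝ, lassoObj X' y lam (fun j => bhat j + s * d' j) =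
      (1/2) * (∑ i, (ε i - s * g i)^2) + lam * (∑ j, |bhat j + s * d' j|) := by
    intro s
    rw [lassoObj]
    congr 2
    refine Finset.sum_congr rfl fun i _ => ?_
    rw [hlin]; rw [hε]; ring
  have hred : ∀ s : ℝ,
      Fu ≤ (1/2) * (∑ i, (ε i - s * g i)^2) + lam * (∑ j, |bhat j + s * d' j|) := by
    intro s
    have := hminred (fun j => bhat j + s * d' j)
    rw [hR] at this
    calc Fu = lassoObj X' y lam bhat := by
            rw [lassoObj, hFudef, hε]
      _ ≤ _ := this
  -- full objective along the path
  have hA : ∀ s : ℝ, lassoObj X y lam (Fin.snoc (fun j => bhat j + s * d' j) (s * t)) =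
      (1/2) * (∑ i, (ε i - s * h i)^2) + lam * ((∑ j, |bhat j + s * d' j|) + |s * t|) := by
    intro s
    rw [hobj]
    congr 2
    refine Finset.sum_congr rfl fun i _ => ?_
    rw [hlin, hε, hh]; ring
  -- quadratic identity
  have I1 : ∀ s : ℝ, (1/2) * (∑ i, (ε i - s * h i)^2) =
      (1/2) * (∑ i, (ε i - s * g i)^2) - s * t * v + s^2 * (Q - Q') := by
    intro s
    have e1 : ∀ i, (ε i - s * h i)^2 = (ε i - s * g i)^2
        - (2*s*t) * (X i (Fin.last p) * ε i) + s^2 * ((h i)^2 - (g i)^2) := by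
      intro i
      have : h i = g i + t * X i (Fin.last p) := rfl
      rw [this]; ring
    rw [Finset.sum_congr rfl fun i _ => e1 i]
    rw [Finset.sum_add_distrib, Finset.sum_sub_distrib, ← Finset.mul_sum, ← Finset.mul_sum,
      Finset.sum_sub_distrib]
    rw [hv, hQ, hQ']
    ring
  -- endpoint s = 1 is b
  have hb1 : (Fin.snoc (fun j => bhat j + (1:ℝ) * d' j) ((1:ℝ) * t)) = b := by
    funext j
    refine Fin.lastCases ?_ ?_ j
    · simp [ht]
    · intro j
      simp [hd']
  -- step 1: lower bound along path
  have step1 : ∀ s : ℝ, 0 ≤ s →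
      Fu + s * (lam * |t| - t * v) + s^2 * (Q - Q') ≤
        lassoObj X y lam (Fin.snoc (fun j => bhat j + s * d' j) (s * t)) := by
    intro s hs
    rw [hA, I1]
    have h1 := hred s
    have h2 : |s * t| = s * |t| := by
      rw [abs_mul, abs_of_nonneg hs]
    rw [h2]
    nlinarith [h1]
  -- step 2: convexity along path
  have step2 : ∀ s : ℝ, 0 ≤ s → s ≤ 1 →
      lassoObj X y lam (Fin.snoc (fun j => bhat j + s * d' j) (s * t)) ≤
        (1 - s) * Fu + s * lassoObj X y lam b := by
    intro s hs0 hs1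
    rw [hA]
    have hb1' : lassoObj X y lam b =
        (1/2) * (∑ i, (ε i - h i)^2) + lam * ((∑ j, |bhat j + d' j|) + |t|) := by
      rw [← hb1, hA]
      norm_num
    rw [hb1']
    have hquad : (∑ i, (ε i - s * h i)^2) ≤
        (1 - s) * (∑ i, (ε i)^2) + s * (∑ i, (ε i - h i)^2) := by
      rw [Finset.mul_sum, Finset.mul_sum, ← Finset.sum_add_distrib]
      refine Finset.sum_le_sum fun i _ => ?_
      nlinarith [mul_nonneg (mul_nonneg hs0 (by linarith : (0:ℝ) ≤ 1 - s)) (sq_nonneg (h i))]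
    have habs : (∑ j, |bhat j + s * d' j|) ≤
        (1 - s) * (∑ j, |bhat j|) + s * (∑ j, |bhat j + d' j|) := by
      rw [Finset.mul_sum, Finset.mul_sum, ← Finset.sum_add_distrib]
      refine Finset.sum_le_sum fun j _ => ?_
      have : bhat j + s * d' j = (1 - s) * bhat j + s * (bhat j + d' j) := by ring
      rw [this]
      calc |(1 - s) * bhat j + s * (bhat j + d' j)|
          ≤ |(1 - s) * bhat j| + |s * (bhat j + d' j)| := abs_add_le _ _
        _ = (1 - s) * |bhat j| + s * |bhat j + d' j| := by
            rw [abs_mul, abs_mul, abs_of_nonneg hs0, abs_of_nonneg (by linarith : (0:ℝ) ≤ 1 - s)]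
    have hst : |s * t| = s * |t| := by rw [abs_mul, abs_of_nonneg hs0]
    rw [hst, hFudef]
    have := mul_le_mul_of_nonneg_left (add_le_add habs (le_refl (s * |t|))) hlam
    nlinarith [mul_le_mul_of_nonneg_left habs hlam]
  -- nonnegativity of the first-order term
  have hfirst : 0 ≤ lam * |t| - t * v := by
    have h1 : t * v ≤ |t * v| := le_abs_self _
    have h2 : |t * v| = |t| * |v| := abs_mul _ _
    have h3 : |t| * |v| ≤ |t| * lam := mul_le_mul_of_nonneg_left hvlam (abs_nonneg t)
    nlinarith
  -- combine: for all s ∈ (0,1], Fu ≤ F b + s * |Q' - Q|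
  have key : ∀ s : ℝ, 0 < s → s ≤ 1 → Fu ≤ lassoObj X y lam b + s * |Q' - Q| := by
    intro s hs0 hs1
    have h1 := step1 s (le_of_lt hs0)
    have h2 := step2 s (le_of_lt hs0) hs1
    have h3 : Fu + s * (lam * |t| - t * v) + s^2 * (Q - Q') ≤
        (1 - s) * Fu + s * lassoObj X y lam b := le_trans h1 h2
    have h4 : s * (Q - Q') ≤ lassoObj X y lam b - Fu + (lam * |t| - t * v) := by
      nlinarith
    have h5 : -(s * |Q' - Q|) ≤ s * (Q - Q') := by
      have : -(|Q' - Q|) ≤ Q - Q' := by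
        rw [neg_le]
        calc -(Q - Q') = Q' - Q := by ring
          _ ≤ |Q' - Q| := le_abs_self _
      nlinarith
    nlinarith
  rw [hFu]
  refine le_of_forall_pos_le_add fun δ hδ => ?_
  have hM : (0:ℝ) ≤ |Q' - Q| := abs_nonneg _
  set s : ℝ := min 1 (δ / (|Q' - Q| + 1)) with hsdef
  have hs0 : 0 < s := lt_min one_pos (div_pos hδ (by linarith))
  have hs1 : s ≤ 1 := min_le_left _ _
  have := key s hs0 hs1
  have hsle : s ≤ δ / (|Q' - Q| + 1) := min_le_right _ _
  have hbound : s * |Q' - Q| ≤ δ := by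
    calc s * |Q' - Q| ≤ (δ / (|Q' - Q| + 1)) * |Q' - Q| := by
          apply mul_le_mul_of_nonneg_right hsle hM
      _ ≤ δ := by
          rw [div_mul_eq_mul_div, div_le_iff₀ (by linarith)]
          nlinarith
  linarith
end
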